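/- arXiv:1112.6044 — 4 statements merged into one kernel-verified Lean document; each statement's English description precedes it below -/
import Mathlib

section
/- Let (X, Σ, μ) be an atomless finite measure space and E a Banach space. If f ∈ L¹(μ, E) is Bochner integrable, then the norm-closure of the set {∫_B f dμ : B ∈ Σ} is a convex subset of E. -/
/-! By Sierpiński's theorem an atomless finite measure takes every value in `[0, μ A]` on
measurable subsets of `A`. For a simple function `g` and `s ∈ [0, 1]` this gives `C ⊆ A` with
`∫_C g = s • ∫_A g`: take a subset of measure `s · μ` inside each level set of `g` in `A`.
Approximating `f` in `L¹` by simple functions gives the same up to `ε` for `f`. For measurable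
`B₁, B₂` and `a + b = 1`, choosing such `C₁ ⊆ B₁ \ B₂` (for `a`) and `C₂ ⊆ B₂ \ B₁` (for `b`),
the set `(B₁ ∩ B₂) ∪ C₁ ∪ C₂` integrates `f` to within `ε` of `a • ∫_{B₁} f + b • ∫_{B₂} f`;
convexity then passes to the closure by continuity. -/

open MeasureTheory Filter Topology

/-- A finite positive measure is atomless (in the measure-atom sense). -/
def MeasureAtomless {X : Type*} [MeasurableSpace X] (μ : Measure X) : Prop :=
  ∀ A : Set X, MeasurableSet A → μ A ≠ 0 →
    ∃ B ⊆ A, MeasurableSet B ∧ 0 < μ B ∧ μ B < μ A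

theorem convex_closure_of_forall_combo_mem_closure {𝕜 E : Type*} [Semiring 𝕜] [PartialOrder 𝕜]
    [AddCommMonoid E] [TopologicalSpace E] [ContinuousAdd E] [Module 𝕜 E]
    [ContinuousConstSMul 𝕜 E] {S : Set E}
    (h : ∀ x ∈ S, ∀ y ∈ S, ∀ a b : 𝕜, 0 ≤ a → 0 ≤ b → a + b = 1 → a • x + b • y ∈ closure S) :
    Convex 𝕜 (closure S) := fun x hx y hy a b ha hb hab => by
  simpa only [closure_closure] using map_mem_closure₂ (f := fun x y => a • x + b • y)
    ((continuous_fst.const_smul a).add (continuous_snd.const_smul b)) hx hy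
    fun x hx y hy => h x hx y hy a b ha hb hab

theorem Real.exists_mem_forall_le_two_mul {T : Set ℝ} (hT : T.Nonempty) (hbdd : BddAbove T)
    (hT₀ : ∀ t ∈ T, 0 ≤ t) : ∃ t ∈ T, ∀ t' ∈ T, t' ≤ 2 * t := by
  rcases le_or_gt (sSup T) 0 with hsup | hsup
  · obtain ⟨t, ht⟩ := hT
    exact ⟨t, ht, fun t' ht' => by linarith [le_csSup hbdd ht', hT₀ t ht]⟩
  · obtain ⟨t, ht, hlt⟩ := exists_lt_of_lt_csSup hT (half_lt_self hsup)
    exact ⟨t, ht, fun t' ht' => by linarith [le_csSup hbdd ht']⟩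

section FiniteMeasure

variable {X : Type*} [MeasurableSpace X] {μ : Measure X} [IsFiniteMeasure μ]

/-- Greedy exhaustion: each step adds at least half of the largest measure that can still be
added inside `A` without exceeding `c`. -/
theorem exists_greedy_exhaustion {A : Set X} {c : ℝ} (hc : 0 ≤ c) :
    ∃ s : ℕ → Set X, Monotone s ∧ ∀ n, MeasurableSet (s n) ∧ s n ⊆ A ∧ μ.real (s n) ≤ c ∧
      ∀ D, MeasurableSet D → D ⊆ A \ s n → μ.real (s n) + μ.real D ≤ c →
        μ.real D ≤ 2 * (μ.real (s (n + 1)) - μ.real (s n)) := by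
  let admissible (C : Set X) : Set (Set X) :=
    {D | MeasurableSet D ∧ D ⊆ A \ C ∧ μ.real C + μ.real D ≤ c}
  have hstep : ∀ C, μ.real C ≤ c →
      ∃ D ∈ admissible C, ∀ D' ∈ admissible C, μ.real D' ≤ 2 * μ.real D := by
    intro C hC
    obtain ⟨_, ⟨D, hD, rfl⟩, hmax⟩ := Real.exists_mem_forall_le_two_mul
      (T := μ.real '' admissible C) ⟨_, ∅, ⟨.empty, Set.empty_subset _, by simpa⟩, rfl⟩
      ⟨μ.real Set.univ, by rintro _ ⟨D, -, rfl⟩; exact measureReal_mono (Set.subset_univ D)⟩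
      (by rintro _ ⟨D, -, rfl⟩; exact measureReal_nonneg)
    exact ⟨D, hD, fun D' hD' => hmax _ ⟨D', hD', rfl⟩⟩
  choose! next hnext hmax using hstep
  have hunion : ∀ C, μ.real C ≤ c → μ.real (C ∪ next C) = μ.real C + μ.real (next C) :=
    fun C hC => measureReal_union
      (Set.disjoint_of_subset_right (hnext C hC).2.1 Set.disjoint_sdiff_right) (hnext C hC).1
  let s : ℕ → Set X := fun n => Nat.rec ∅ (fun _ C => C ∪ next C) n
  have hs : ∀ n, MeasurableSet (s n) ∧ s n ⊆ A ∧ μ.real (s n) ≤ c := by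
    intro n
    induction n with
    | zero => exact ⟨.empty, Set.empty_subset _, by simpa [s]⟩
    | succ n ih =>
      obtain ⟨hDm, hDA, hDc⟩ := hnext (s n) ih.2.2
      exact ⟨ih.1.union hDm, Set.union_subset ih.2.1 (hDA.trans Set.sdiff_subset),
        (hunion (s n) ih.2.2).trans_le hDc⟩
  refine ⟨s, monotone_nat_of_le_succ fun n => Set.subset_union_left, fun n =>
    ⟨(hs n).1, (hs n).2.1, (hs n).2.2, fun D hD hDA hDc => ?_⟩⟩
  have hgain : μ.real (s (n + 1)) - μ.real (s n) = μ.real (next (s n)) := by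
    rw [show s (n + 1) = s n ∪ next (s n) from rfl, hunion (s n) (hs n).2.2]
    ring
  rw [hgain]
  exact hmax (s n) (hs n).2.2 D ⟨hD, hDA, hDc⟩

namespace MeasureAtomless

variable (hμ : MeasureAtomless μ)
include hμ

theorem exists_subset_measureReal_pos_le_half {A : Set X} (hA : MeasurableSet A)
    (hA₀ : 0 < μ.real A) : ∃ B ⊆ A, MeasurableSet B ∧ 0 < μ.real B ∧ 2 * μ.real B ≤ μ.real A := by
  obtain ⟨B, hBA, hB, hB₀, hBlt⟩ := hμ A hA (ENNReal.toReal_pos_iff.1 hA₀).1.ne'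
  have hB₀' : 0 < μ.real B := ENNReal.toReal_pos hB₀.ne' (measure_ne_top μ B)
  have hBlt' : μ.real B < μ.real A :=
    (ENNReal.toReal_lt_toReal (measure_ne_top μ B) (measure_ne_top μ A)).2 hBlt
  have hcompl : μ.real (A \ B) = μ.real A - μ.real B := measureReal_sdiff hBA hB
  by_cases h : 2 * μ.real B ≤ μ.real A
  · exact ⟨B, hBA, hB, hB₀', h⟩
  · exact ⟨A \ B, Set.sdiff_subset, hA.diff hB, by linarith, by linarith⟩

theorem exists_subset_measureReal_pos_le {A : Set X} (hA : MeasurableSet A)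
    (hA₀ : 0 < μ.real A) {δ : ℝ} (hδ : 0 < δ) :
    ∃ B ⊆ A, MeasurableSet B ∧ 0 < μ.real B ∧ μ.real B ≤ δ := by
  have halving : ∀ n : ℕ,
      ∃ B ⊆ A, MeasurableSet B ∧ 0 < μ.real B ∧ 2 ^ n * μ.real B ≤ μ.real A := by
    intro n
    induction n with
    | zero => exact ⟨A, subset_rfl, hA, hA₀, by simp⟩
    | succ n ih =>
      obtain ⟨B, hBA, hB, hB₀, hBn⟩ := ih
      obtain ⟨B', hB'B, hB', hB'₀, hB'half⟩ := hμ.exists_subset_measureReal_pos_le_half hB hB₀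
      refine ⟨B', hB'B.trans hBA, hB', hB'₀, ?_⟩
      rw [pow_succ]
      nlinarith [pow_pos (two_pos (α := ℝ)) n]
  obtain ⟨n, hn⟩ := pow_unbounded_of_one_lt (μ.real A / δ) one_lt_two
  obtain ⟨B, hBA, hB, hB₀, hBn⟩ := halving n
  rw [div_lt_iff₀ hδ] at hn
  exact ⟨B, hBA, hB, hB₀, le_of_mul_le_mul_left (a := (2 : ℝ) ^ n) (by linarith) (by positivity)⟩

theorem exists_subset_measureReal_eq {A : Set X} (hA : MeasurableSet A) {c : ℝ} (hc₀ : 0 ≤ c)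
    (hcA : c ≤ μ.real A) : ∃ C ⊆ A, MeasurableSet C ∧ μ.real C = c := by
  obtain ⟨s, hmono, hs⟩ := exists_greedy_exhaustion (μ := μ) (A := A) hc₀
  have hlim : Tendsto (fun n => μ.real (s n)) atTop (𝓝 (μ.real (⋃ n, s n))) :=
    (ENNReal.tendsto_toReal (measure_ne_top μ _)).comp (tendsto_measure_iUnion_atTop hmono)
  have hle : μ.real (⋃ n, s n) ≤ c := le_of_tendsto' hlim fun n => (hs n).2.2.1
  refine ⟨⋃ n, s n, Set.iUnion_subset fun n => (hs n).2.1, .iUnion fun n => (hs n).1,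
    le_antisymm hle (not_lt.1 fun hlt => ?_)⟩
  have hgap : 0 < μ.real (A \ ⋃ n, s n) := by
    linarith [le_measureReal_sdiff (μ := μ) (s₁ := A) (s₂ := ⋃ n, s n)]
  obtain ⟨B, hBA, hB, hB₀, hBc⟩ :=
    hμ.exists_subset_measureReal_pos_le (hA.diff (.iUnion fun n => (hs n).1)) hgap
      (sub_pos.2 hlt)
  have hB_le : ∀ n, μ.real B ≤ 2 * (μ.real (s (n + 1)) - μ.real (s n)) := fun n =>
    (hs n).2.2.2 B hB (hBA.trans (Set.sdiff_subset_sdiff_right (Set.subset_iUnion s n)))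
      (by linarith [measureReal_mono (μ := μ) (Set.subset_iUnion s n)])
  have hgain : Tendsto (fun n => 2 * (μ.real (s (n + 1)) - μ.real (s n))) atTop (𝓝 0) := by
    simpa using ((hlim.comp (tendsto_add_atTop_nat 1)).sub hlim).const_mul 2
  linarith [ge_of_tendsto' hgain hB_le]

end MeasureAtomless

end FiniteMeasure

namespace MeasureTheory

variable {X : Type*} [MeasurableSpace X] {μ : Measure X}
  {E : Type*} [NormedAddCommGroup E] [NormedSpace ℝ E]

theorem SimpleFunc.setIntegral_eq_sum [CompleteSpace E] [IsFiniteMeasure μ] (g : SimpleFunc X E)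
    (C : Set X) :
    ∫ x in C, g x ∂μ = ∑ y ∈ g.range, μ.real (g ⁻¹' {y} ∩ C) • y := by
  rw [g.integral_eq_sum g.integrable_of_isFiniteMeasure]
  simp only [measureReal_restrict_apply (g.measurableSet_fiber _)]

theorem Integrable.exists_simpleFunc_norm_setIntegral_sub_le {f : X → E} (hf : Integrable f μ)
    {ε : ℝ} (hε : 0 < ε) : ∃ g : SimpleFunc X E,
      ∀ C : Set X, ‖∫ x in C, f x ∂μ - ∫ x in C, g x ∂μ‖ ≤ ε := by
  obtain ⟨g, hfg, hg⟩ := (memLp_one_iff_integrable.2 hf).exists_simpleFunc_eLpNorm_sub_lt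
    ENNReal.one_ne_top (ENNReal.ofReal_pos.2 hε).ne'
  have hgi : Integrable g μ := memLp_one_iff_integrable.1 hg
  refine ⟨g, fun C => ?_⟩
  have hL1 : ∫ x, ‖f x - g x‖ ∂μ ≤ ε := by
    have hnorm := integral_norm_eq_lintegral_enorm (hf.sub hgi).aestronglyMeasurable
    rw [eLpNorm_one_eq_lintegral_enorm] at hfg
    simp only [Pi.sub_apply] at hnorm hfg
    rw [hnorm]
    exact ENNReal.toReal_le_of_le_ofReal hε.le hfg.le
  calc ‖∫ x in C, f x ∂μ - ∫ x in C, g x ∂μ‖ = ‖∫ x in C, (f x - g x) ∂μ‖ := by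
        rw [integral_sub hf.integrableOn hgi.integrableOn]
    _ ≤ ∫ x in C, ‖f x - g x‖ ∂μ := norm_integral_le_integral_norm _
    _ ≤ ∫ x, ‖f x - g x‖ ∂μ :=
        setIntegral_le_integral (hf.sub hgi).norm (.of_forall fun _ => norm_nonneg _)
    _ ≤ ε := hL1

end MeasureTheory

def setIntegralRange {X E : Type*} [MeasurableSpace X] [NormedAddCommGroup E] [NormedSpace ℝ E]
    (μ : Measure X) (f : X → E) : Set E :=
  {y | ∃ B : Set X, MeasurableSet B ∧ y = ∫ x in B, f x ∂μ}

namespace MeasureAtomless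

variable {X : Type*} [MeasurableSpace X] {μ : Measure X} [IsFiniteMeasure μ]
  {E : Type*} [NormedAddCommGroup E] [NormedSpace ℝ E] [CompleteSpace E]
  (hμ : MeasureAtomless μ)
include hμ

theorem exists_subset_setIntegral_simpleFunc_eq_smul (g : SimpleFunc X E) {A : Set X}
    (hA : MeasurableSet A) {s : ℝ} (hs₀ : 0 ≤ s) (hs₁ : s ≤ 1) :
    ∃ C ⊆ A, MeasurableSet C ∧ ∫ x in C, g x ∂μ = s • ∫ x in A, g x ∂μ := by
  choose D hDA hD hDμ using fun y : E =>
    hμ.exists_subset_measureReal_eq ((g.measurableSet_fiber y).inter hA)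
      (mul_nonneg hs₀ measureReal_nonneg) (mul_le_of_le_one_left measureReal_nonneg hs₁)
  have hfiber : ∀ y ∈ g.range, g ⁻¹' {y} ∩ ⋃ z ∈ g.range, D z = D y := by
    intro y hy
    ext x
    simp only [Set.mem_inter_iff, Set.mem_preimage, Set.mem_singleton_iff, Set.mem_iUnion]
    constructor
    · rintro ⟨rfl, z, -, hxz⟩
      rwa [((hDA z hxz).1 : g x = z)]
    · exact fun hxy => ⟨(hDA y hxy).1, y, hy, hxy⟩
  refine ⟨⋃ y ∈ g.range, D y, Set.iUnion₂_subset fun y _ => (hDA y).trans Set.inter_subset_right,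
    g.range.measurableSet_biUnion fun y _ => hD y, ?_⟩
  rw [g.setIntegral_eq_sum, g.setIntegral_eq_sum, Finset.smul_sum]
  refine Finset.sum_congr rfl fun y hy => ?_
  rw [hfiber y hy, hDμ, mul_smul]

theorem exists_subset_norm_setIntegral_sub_smul_le {f : X → E} (hf : Integrable f μ) {A : Set X}
    (hA : MeasurableSet A) {s : ℝ} (hs₀ : 0 ≤ s) (hs₁ : s ≤ 1) {ε : ℝ} (hε : 0 < ε) :
    ∃ C ⊆ A, MeasurableSet C ∧ ‖∫ x in C, f x ∂μ - s • ∫ x in A, f x ∂μ‖ ≤ ε := by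
  obtain ⟨g, hfg⟩ := hf.exists_simpleFunc_norm_setIntegral_sub_le (half_pos hε)
  obtain ⟨C, hCA, hC, hgC⟩ := hμ.exists_subset_setIntegral_simpleFunc_eq_smul g hA hs₀ hs₁
  refine ⟨C, hCA, hC, ?_⟩
  calc ‖∫ x in C, f x ∂μ - s • ∫ x in A, f x ∂μ‖
      = ‖(∫ x in C, f x ∂μ - ∫ x in C, g x ∂μ) -
          s • (∫ x in A, f x ∂μ - ∫ x in A, g x ∂μ)‖ := by
        rw [hgC, smul_sub, sub_sub_sub_cancel_right]
    _ ≤ ε / 2 + s * (ε / 2) := by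
        refine (norm_sub_le _ _).trans (add_le_add (hfg C) ?_)
        rw [norm_smul, Real.norm_of_nonneg hs₀]
        exact mul_le_mul_of_nonneg_left (hfg A) hs₀
    _ ≤ ε := by nlinarith

theorem combo_setIntegral_mem_closure {f : X → E} (hf : Integrable f μ) {B₁ B₂ : Set X}
    (hB₁ : MeasurableSet B₁) (hB₂ : MeasurableSet B₂) {a b : ℝ} (ha : 0 ≤ a) (hb : 0 ≤ b)
    (hab : a + b = 1) :
    a • ∫ x in B₁, f x ∂μ + b • ∫ x in B₂, f x ∂μ ∈ closure (setIntegralRange μ f) := by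
  rw [Metric.mem_closure_iff]
  intro ε hε
  obtain ⟨C₁, hC₁B, hC₁, hC₁ε⟩ := hμ.exists_subset_norm_setIntegral_sub_smul_le hf
    (hB₁.diff hB₂) ha (by linarith) (by positivity : 0 < ε / 3)
  obtain ⟨C₂, hC₂B, hC₂, hC₂ε⟩ := hμ.exists_subset_norm_setIntegral_sub_smul_le hf
    (hB₂.diff hB₁) hb (by linarith) (by positivity : 0 < ε / 3)
  have hsplit₁ := (integral_inter_add_sdiff hB₂ (hf.integrableOn (s := B₁))).symm
  have hsplit₂ := (integral_inter_add_sdiff hB₁ (hf.integrableOn (s := B₂))).symm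
  rw [Set.inter_comm] at hsplit₂
  have hunion : ∫ x in B₁ ∩ B₂ ∪ (C₁ ∪ C₂), f x ∂μ =
      ∫ x in B₁ ∩ B₂, f x ∂μ + (∫ x in C₁, f x ∂μ + ∫ x in C₂, f x ∂μ) := by
    have hd₁ : Disjoint (B₁ ∩ B₂) C₁ := Set.disjoint_left.2 fun _ hx hxC => (hC₁B hxC).2 hx.2
    have hd₂ : Disjoint (B₁ ∩ B₂) C₂ := Set.disjoint_left.2 fun _ hx hxC => (hC₂B hxC).2 hx.1
    have hd₁₂ : Disjoint C₁ C₂ := Set.disjoint_left.2 fun _ hx₁ hx₂ => (hC₁B hx₁).2 (hC₂B hx₂).1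
    rw [setIntegral_union (hd₁.union_right hd₂) (hC₁.union hC₂) hf.integrableOn hf.integrableOn,
      setIntegral_union hd₁₂ hC₂ hf.integrableOn hf.integrableOn]
  refine ⟨_, ⟨_, (hB₁.inter hB₂).union (hC₁.union hC₂), rfl⟩, ?_⟩
  rw [dist_eq_norm, hunion, hsplit₁, hsplit₂]
  obtain rfl : b = 1 - a := by linarith
  calc _ = ‖-((∫ x in C₁, f x ∂μ - a • ∫ x in B₁ \ B₂, f x ∂μ) +
        (∫ x in C₂, f x ∂μ - (1 - a) • ∫ x in B₂ \ B₁, f x ∂μ))‖ := by congr 1; module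
    _ ≤ ε / 3 + ε / 3 := (norm_neg _).trans_le ((norm_add_le _ _).trans (add_le_add hC₁ε hC₂ε))
    _ < ε := by linarith

end MeasureAtomless

/-- Uhl's theorem: for an atomless finite measure and a Bochner integrable `f`,
the closure of the set of integrals of `f` over measurable sets is convex. -/
theorem uhl_convexity {X : Type*} [MeasurableSpace X] (μ : Measure X) [IsFiniteMeasure μ]
    (hμ : MeasureAtomless μ)
    {E : Type*} [NormedAddCommGroup E] [NormedSpace ℝ E] [CompleteSpace E]
    (f : X → E) (hf : Integrable f μ) :
    Convex ℝ (closure {y : E | ∃ B : Set X, MeasurableSet B ∧ y = ∫ x in B, f x ∂μ}) := by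
  refine convex_closure_of_forall_combo_mem_closure ?_
  rintro _ ⟨B₁, hB₁, rfl⟩ _ ⟨B₂, hB₂, rfl⟩ a b ha hb hab
  exact hμ.combo_setIntegral_mem_closure hf hB₁ hB₂ ha hb hab
end

section
/- Let (X, Σ, μ) be an atomless finite measure space, E a Banach space, f, g ∈ L¹(μ, E), S ∈ Σ, and δ ∈ (0,1). Then there exists a sequence of measurable sets Eₙ ⊆ S such that the pair (μ(Eₙ), ∫_{Eₙ} (f − g) dμ) converges to δ·(μ(S), ∫_S (f − g) dμ) in ℝ × E. -/
open MeasureTheory Filter Topology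

/-! An atomless measure takes every value in `[0, μ A]` on measurable subsets of `A`
(Sierpiński). Build a subset greedily, each step adding a set of at least half the largest
measure that still fits below `r`: a non-null set fitting beside the final union would have
fitted at every stage, so the steps could not have summed to at most `r`. As atomless measures
have arbitrarily small non-null subsets, the union has measure exactly `r`.
Splitting every fibre `φ⁻¹{c} ∩ S` of a simple function `φ` in the ratio `δ` then gives
`B ⊆ S` with `μ B = δ μ S` and `∫_B φ = δ ∫_S φ` exactly, and approximating `f - g` by simple
functions in `L¹` makes the error in the integral as small as we like. -/

open scoped ENNReal

theorem ENNReal.exists_mem_sSup_le_two_mul {s : Set ℝ≥0∞} (hs : s.Nonempty) (htop : sSup s ≠ ∞) :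
    ∃ x ∈ s, sSup s ≤ 2 * x := by
  rcases eq_or_ne (sSup s) 0 with h0 | h0
  · obtain ⟨x, hx⟩ := hs
    exact ⟨x, hx, h0 ▸ zero_le⟩
  · obtain ⟨x, hx, hlt⟩ := exists_lt_of_lt_csSup hs (ENNReal.half_lt_self h0 htop)
    refine ⟨x, hx, ?_⟩
    rw [ENNReal.div_lt_iff (by simp) (by simp)] at hlt
    rw [mul_comm]
    exact hlt.le

namespace MeasureAtomless

variable {X : Type*} [MeasurableSpace X] {μ : Measure X} {A : Set X}

theorem exists_subset_measure_pos_le_half (hμ : MeasureAtomless μ) (hA : MeasurableSet A)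
    (h0 : μ A ≠ 0) : ∃ B ⊆ A, MeasurableSet B ∧ 0 < μ B ∧ μ B ≤ 2⁻¹ * μ A := by
  obtain ⟨C, hCA, hC, hC0, hCA_lt⟩ := hμ A hA h0
  rcases le_or_gt (μ C) (2⁻¹ * μ A) with hle | hgt
  · exact ⟨C, hCA, hC, hC0, hle⟩
  · have hdiff : μ (A \ C) = μ A - μ C := measure_sdiff hCA hC.nullMeasurableSet hCA_lt.ne_top
    refine ⟨A \ C, Set.sdiff_subset, hA.diff hC, hdiff ▸ tsub_pos_of_lt hCA_lt, ?_⟩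
    rw [hdiff, tsub_le_iff_right]
    calc μ A = 2⁻¹ * μ A + 2⁻¹ * μ A := by
          rw [← add_mul, ENNReal.inv_two_add_inv_two, one_mul]
      _ ≤ 2⁻¹ * μ A + μ C := add_le_add_right hgt.le _

theorem exists_subset_measure_pos_le_inv_two_pow_mul (hμ : MeasureAtomless μ)
    (hA : MeasurableSet A) (h0 : μ A ≠ 0) (n : ℕ) :
    ∃ B ⊆ A, MeasurableSet B ∧ 0 < μ B ∧ μ B ≤ 2⁻¹ ^ n * μ A := by
  induction n with
  | zero => exact ⟨A, subset_rfl, hA, pos_iff_ne_zero.2 h0, by simp⟩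
  | succ n ih =>
    obtain ⟨B, hBA, hB, hB0, hBle⟩ := ih
    obtain ⟨C, hCB, hC, hC0, hCle⟩ := hμ.exists_subset_measure_pos_le_half hB hB0.ne'
    refine ⟨C, hCB.trans hBA, hC, hC0, ?_⟩
    calc μ C ≤ 2⁻¹ * μ B := hCle
      _ ≤ 2⁻¹ * (2⁻¹ ^ n * μ A) := by gcongr
      _ = 2⁻¹ ^ (n + 1) * μ A := by rw [pow_succ', mul_assoc]

theorem exists_subset_measure_pos_lt (hμ : MeasureAtomless μ) (hA : MeasurableSet A)
    (h0 : μ A ≠ 0) (hfin : μ A ≠ ∞) {ε : ℝ≥0∞} (hε : ε ≠ 0) :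
    ∃ B ⊆ A, MeasurableSet B ∧ 0 < μ B ∧ μ B < ε := by
  obtain ⟨n, hn⟩ := ENNReal.exists_inv_two_pow_lt (ENNReal.div_pos hε hfin).ne'
  obtain ⟨B, hBA, hB, hB0, hBle⟩ := hμ.exists_subset_measure_pos_le_inv_two_pow_mul hA h0 n
  exact ⟨B, hBA, hB, hB0, hBle.trans_lt ((ENNReal.lt_div_iff_mul_lt (.inl h0) (.inl hfin)).1 hn)⟩

end MeasureAtomless

section Sierpinski

variable {X : Type*} [MeasurableSpace X] {μ : Measure X} {A : Set X} {r : ℝ≥0∞}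

theorem MeasureTheory.Measure.exists_half_maximal_subset_sdiff (μ : Measure X)
    (A : Set X) {t : Set X} (ht : μ t ≤ r) (hr : r ≠ ∞) :
    ∃ C ⊆ A \ t, MeasurableSet C ∧ μ t + μ C ≤ r ∧
      ∀ C' ⊆ A \ t, MeasurableSet C' → μ t + μ C' ≤ r → μ C' ≤ 2 * μ C := by
  set adm : Set (Set X) := {C | C ⊆ A \ t ∧ MeasurableSet C ∧ μ t + μ C ≤ r}
  have hne : (μ '' adm).Nonempty := ⟨μ ∅, ∅, by simpa [adm], rfl⟩
  have hsup : sSup (μ '' adm) ≤ r := sSup_le <| by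
    rintro _ ⟨C, ⟨-, -, hC⟩, rfl⟩
    exact le_add_self.trans hC
  obtain ⟨_, ⟨C, ⟨hCA, hC, hCr⟩, rfl⟩, hmax⟩ :=
    ENNReal.exists_mem_sSup_le_two_mul hne (ne_top_of_le_ne_top hr hsup)
  exact ⟨C, hCA, hC, hCr, fun C' hC'A hC' hC'r =>
    (le_sSup (Set.mem_image_of_mem μ (show C' ∈ adm from ⟨hC'A, hC', hC'r⟩))).trans hmax⟩

theorem MeasureTheory.Measure.exists_maximal_subset_measure_le (μ : Measure X) (A : Set X)
    (hr : r ≠ ∞) : ∃ T ⊆ A, MeasurableSet T ∧ μ T ≤ r ∧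
      ∀ C ⊆ A \ T, MeasurableSet C → μ T + μ C ≤ r → μ C = 0 := by
  have step : ∀ t : Set X, ∃ C, μ t ≤ r → C ⊆ A \ t ∧ MeasurableSet C ∧ μ t + μ C ≤ r ∧
      ∀ C' ⊆ A \ t, MeasurableSet C' → μ t + μ C' ≤ r → μ C' ≤ 2 * μ C := fun t =>
    if ht : μ t ≤ r then (μ.exists_half_maximal_subset_sdiff A ht hr).imp fun _ hC _ => hC
    else ⟨∅, fun h => absurd h ht⟩
  choose next hnext using step
  set t : ℕ → Set X := fun n => (fun s => s ∪ next s)^[n] ∅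
  have ht_succ (n : ℕ) : t (n + 1) = t n ∪ next (t n) := Function.iterate_succ_apply' _ _ _
  have ht (n : ℕ) : t n ⊆ A ∧ MeasurableSet (t n) ∧ μ (t n) ≤ r := by
    induction n with
    | zero => simp [t]
    | succ n ih =>
      obtain ⟨hCA, hC, hCr, -⟩ := hnext _ ih.2.2
      rw [ht_succ]
      exact ⟨Set.union_subset ih.1 (hCA.trans Set.sdiff_subset), ih.2.1.union hC,
        (measure_union_le _ _).trans hCr⟩
  have ht_eq_sum (n : ℕ) : μ (t n) = ∑ i ∈ Finset.range n, μ (next (t i)) := by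
    induction n with
    | zero => simp [t]
    | succ n ih =>
      obtain ⟨hCA, hC, -⟩ := hnext _ (ht n).2.2
      rw [ht_succ, measure_union (Set.disjoint_sdiff_right.mono_right hCA) hC,
        Finset.sum_range_succ, ih]
  set T := ⋃ n, t n
  refine ⟨T, Set.iUnion_subset fun n => (ht n).1, .iUnion fun n => (ht n).2.1, ?_,
    fun C hCA hC hCr => ?_⟩
  · rw [Monotone.measure_iUnion (monotone_nat_of_le_succ fun n => by
      rw [ht_succ]; exact Set.subset_union_left)]
    exact iSup_le fun n => (ht n).2.2
  have hC_le (n : ℕ) : μ C ≤ 2 * μ (next (t n)) := by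
    refine (hnext _ (ht n).2.2).2.2.2 C
      (hCA.trans (Set.sdiff_subset_sdiff_right (Set.subset_iUnion t n))) hC ?_
    calc μ (t n) + μ C ≤ μ T + μ C := by gcongr; exact Set.subset_iUnion t n
      _ ≤ r := hCr
  have hsum : ∑' _ : ℕ, μ C ≤ 2 * r := calc
    ∑' _ : ℕ, μ C ≤ ∑' n, 2 * μ (next (t n)) := ENNReal.tsum_le_tsum hC_le
    _ = 2 * ∑' n, μ (next (t n)) := ENNReal.tsum_mul_left
    _ ≤ 2 * r := by
      gcongr
      exact ENNReal.tsum_le_of_sum_range_le fun n => ht_eq_sum n ▸ (ht n).2.2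
  by_contra hC0
  rw [ENNReal.tsum_const_eq_top_of_ne_zero hC0] at hsum
  exact ENNReal.mul_ne_top (by simp) hr (top_le_iff.1 hsum)

theorem MeasureAtomless.exists_subset_measure_eq (hμ : MeasureAtomless μ) (hA : MeasurableSet A)
    (hfin : μ A ≠ ∞) (hr : r ≤ μ A) : ∃ B ⊆ A, MeasurableSet B ∧ μ B = r := by
  obtain ⟨T, hTA, hT, hTr, hmax⟩ :=
    μ.exists_maximal_subset_measure_le A (ne_top_of_le_ne_top hfin hr)
  refine ⟨T, hTA, hT, hTr.antisymm (not_lt.1 fun hlt => ?_)⟩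
  obtain ⟨C, hCA, hC, hC0, hCr⟩ := hμ.exists_subset_measure_pos_lt (hA.diff hT)
    ((tsub_pos_of_lt (hlt.trans_le hr)).trans_le le_measure_sdiff).ne'
    (ne_top_of_le_ne_top hfin (measure_mono Set.sdiff_subset)) (tsub_pos_of_lt hlt).ne'
  exact hC0.ne' (hmax C hCA hC (lt_tsub_iff_left.1 hCr).le)

end Sierpinski

section Integral

variable {X : Type*} [MeasurableSpace X] {μ : Measure X} {E : Type*} [NormedAddCommGroup E]

theorem MeasureTheory.Integrable.exists_simpleFunc_integral_norm_sub_lt {h : X → E}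
    (hh : Integrable h μ) {ε : ℝ} (hε : 0 < ε) :
    ∃ φ : SimpleFunc X E, Integrable φ μ ∧ ∫ x, ‖h x - φ x‖ ∂μ < ε := by
  obtain ⟨φ, hφ_lt, hφ⟩ := (memLp_one_iff_integrable.2 hh).exists_simpleFunc_eLpNorm_sub_lt
    ENNReal.one_ne_top (ENNReal.ofReal_pos.2 hε).ne'
  have hφ_int := memLp_one_iff_integrable.1 hφ
  refine ⟨φ, hφ_int, ?_⟩
  rw [integral_norm_eq_lintegral_enorm (f := fun x => h x - φ x)
      (hh.sub hφ_int).aestronglyMeasurable,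
    ← ENNReal.toReal_ofReal hε.le]
  rw [eLpNorm_one_eq_lintegral_enorm] at hφ_lt
  exact ENNReal.toReal_strict_mono ENNReal.ofReal_ne_top hφ_lt

variable [NormedSpace ℝ E] [CompleteSpace E] [IsFiniteMeasure μ] {S : Set X} {δ : ℝ}

theorem MeasureAtomless.exists_subset_measure_eq_setIntegral_simpleFunc_eq
    (hμ : MeasureAtomless μ) (φ : SimpleFunc X E) (hS : MeasurableSet S)
    (hδ : δ ∈ Set.Icc (0 : ℝ) 1) :
    ∃ B ⊆ S, MeasurableSet B ∧ μ B = ENNReal.ofReal δ * μ S ∧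
      ∫ x in B, φ x ∂μ = δ • ∫ x in S, φ x ∂μ := by
  have hfiber (c : E) : ∃ B ⊆ φ ⁻¹' {c} ∩ S, MeasurableSet B ∧
      μ B = ENNReal.ofReal δ * μ (φ ⁻¹' {c} ∩ S) :=
    hμ.exists_subset_measure_eq ((φ.measurableSet_fiber c).inter hS) (measure_ne_top _ _)
      (mul_le_of_le_one_left' (ENNReal.ofReal_le_one.2 hδ.2))
  choose Bc hBcS hBc hμBc using hfiber
  set B := ⋃ c ∈ φ.range, Bc c
  have hfiber_B (c : E) : φ ⁻¹' {c} ∩ B = Bc c := by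
    ext x
    simp only [B, Set.mem_inter_iff, Set.mem_preimage, Set.mem_singleton_iff, Set.mem_iUnion]
    constructor
    · rintro ⟨rfl, d, -, hx⟩
      rwa [(hBcS d hx).1]
    · intro hx
      have hφx : φ x = c := (hBcS c hx).1
      exact ⟨hφx, c, hφx ▸ φ.mem_range_self x, hx⟩
  have hμ_fiber (c : E) : μ (φ ⁻¹' {c} ∩ B) = ENNReal.ofReal δ * μ (φ ⁻¹' {c} ∩ S) := by
    rw [hfiber_B, hμBc]
  refine ⟨B, Set.iUnion₂_subset fun c _ => (hBcS c).trans Set.inter_subset_right,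
    Finset.measurableSet_biUnion _ fun c _ => hBc c, ?_, ?_⟩
  · rw [← Measure.restrict_apply_univ B, ← φ.sum_range_measure_preimage_singleton,
      ← Measure.restrict_apply_univ S, ← φ.sum_range_measure_preimage_singleton, Finset.mul_sum]
    refine Finset.sum_congr rfl fun c _ => ?_
    rw [Measure.restrict_apply (φ.measurableSet_fiber c),
      Measure.restrict_apply (φ.measurableSet_fiber c), hμ_fiber]
  · rw [φ.integral_eq_sum (φ.integrable_of_isFiniteMeasure),
      φ.integral_eq_sum (φ.integrable_of_isFiniteMeasure), Finset.smul_sum]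
    refine Finset.sum_congr rfl fun c _ => ?_
    rw [measureReal_restrict_apply (φ.measurableSet_fiber c),
      measureReal_restrict_apply (φ.measurableSet_fiber c), measureReal_def, measureReal_def,
      hμ_fiber, ENNReal.toReal_mul, ENNReal.toReal_ofReal hδ.1, smul_smul]

theorem MeasureAtomless.exists_subset_measure_eq_norm_setIntegral_sub_le
    (hμ : MeasureAtomless μ) {h : X → E} (hh : Integrable h μ) (hS : MeasurableSet S)
    (hδ : δ ∈ Set.Icc (0 : ℝ) 1) {ε : ℝ} (hε : 0 < ε) :
    ∃ B ⊆ S, MeasurableSet B ∧ μ B = ENNReal.ofReal δ * μ S ∧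
      ‖∫ x in B, h x ∂μ - δ • ∫ x in S, h x ∂μ‖ ≤ ε := by
  obtain ⟨φ, hφ, hφ_lt⟩ := hh.exists_simpleFunc_integral_norm_sub_lt (half_pos hε)
  obtain ⟨B, hBS, hB, hμB, hφB⟩ :=
    hμ.exists_subset_measure_eq_setIntegral_simpleFunc_eq φ hS hδ
  refine ⟨B, hBS, hB, hμB, ?_⟩
  set η := ∫ x, ‖h x - φ x‖ ∂μ
  have hη (s : Set X) : ‖∫ x in s, (h x - φ x) ∂μ‖ ≤ η :=
    (norm_integral_le_integral_norm _).trans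
      (setIntegral_le_integral (hh.sub hφ).norm (.of_forall fun _ => norm_nonneg _))
  have hsplit : ∫ x in B, h x ∂μ - δ • ∫ x in S, h x ∂μ =
      ∫ x in B, (h x - φ x) ∂μ - δ • ∫ x in S, (h x - φ x) ∂μ := by
    rw [integral_sub hh.integrableOn hφ.integrableOn, integral_sub hh.integrableOn hφ.integrableOn,
      hφB, smul_sub]
    abel
  calc ‖∫ x in B, h x ∂μ - δ • ∫ x in S, h x ∂μ‖
      ≤ ‖∫ x in B, (h x - φ x) ∂μ‖ + δ * ‖∫ x in S, (h x - φ x) ∂μ‖ := by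
        rw [hsplit]
        refine (norm_sub_le _ _).trans_eq ?_
        rw [norm_smul, Real.norm_of_nonneg hδ.1]
    _ ≤ η + 1 * η := by gcongr; exacts [hη B, hδ.2, hη S]
    _ ≤ ε := by linarith

end Integral

/-- There is a sequence of measurable subsets `Eₙ` of `S` with
`(μ Eₙ, ∫_{Eₙ} (f - g)) → δ • (μ S, ∫_S (f - g))`. -/
theorem exists_approx_fraction_sets {X : Type*} [MeasurableSpace X] (μ : Measure X)
    [IsFiniteMeasure μ] (hμ : MeasureAtomless μ)
    {E : Type*} [NormedAddCommGroup E] [NormedSpace ℝ E] [CompleteSpace E]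
    (f g : X → E) (hf : Integrable f μ) (hg : Integrable g μ)
    {S : Set X} (hS : MeasurableSet S) {δ : ℝ} (hδ : δ ∈ Set.Ioo (0 : ℝ) 1) :
    ∃ En : ℕ → Set X, (∀ n, MeasurableSet (En n) ∧ En n ⊆ S) ∧
      Tendsto (fun n => (((μ (En n)).toReal : ℝ), ∫ x in En n, (f x - g x) ∂μ)) atTop
        (𝓝 (δ * (μ S).toReal, δ • ∫ x in S, (f x - g x) ∂μ)) := by
  choose En hEnS hEn hμEn hEn_int using fun n : ℕ =>
    hμ.exists_subset_measure_eq_norm_setIntegral_sub_le (hf.sub hg) hS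
      (Set.Ioo_subset_Icc_self hδ) (Nat.one_div_pos_of_nat (n := n))
  refine ⟨En, fun n => ⟨hEn n, hEnS n⟩, Tendsto.prodMk_nhds ?_ ?_⟩
  · have hμEn_real (n : ℕ) : (μ (En n)).toReal = δ * (μ S).toReal := by
      rw [hμEn, ENNReal.toReal_mul, ENNReal.toReal_ofReal hδ.1.le]
    simp only [hμEn_real, tendsto_const_nhds]
  · rw [tendsto_iff_norm_sub_tendsto_zero]
    exact squeeze_zero (fun _ => norm_nonneg _) hEn_int tendsto_one_div_add_atTop_nhds_zero_nat
end

section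
/- Let (T, Σ, μ) be an atomless finite measure space, Ω a finite set, Y a Banach space, and let y, f : T × Ω → Y be such that y(·, ω), f(·, ω) ∈ L¹(μ, Y) for each ω ∈ Ω. For S ∈ Σ with μ(S) > 0 and r ∈ (0,1), there exists a sequence Eₙ ∈ Σ, Eₙ ⊆ S, such that for every ω ∈ Ω, (μ(Eₙ), ∫_{Eₙ}(y(·,ω) − f(·,ω)) dμ) → r·(μ(S), ∫_S (y(·,ω) − f(·,ω)) dμ). -/
open MeasureTheory Filter Topology

/-! By Sierpiński's theorem an atomless finite measure takes every value in `[0, μ A]` on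
measurable subsets of `A`. Applied inside each fibre of a simple function `g`, it yields `E ⊆ S`
with `μ E = r μ S` and `∫_E g = r ∫_S g` exactly. An integrable `G` is `L¹`-close to a simple `g`,
so the same `E` brings `∫_E G` within `(1 + r) ‖G - g‖₁` of `r ∫_S G`. Applying this to the
`Y^Ω`-valued function `t ↦ (y t ω - f t ω)_ω` with errors `1 / (n + 1)` gives one sequence that
works for every coordinate `ω` at once. -/

open Set ENNReal

lemma ENNReal.exists_iSup_le_two_mul {ι : Type*} [Nonempty ι] {f : ι → ℝ≥0∞}
    (hf : ⨆ i, f i ≠ ∞) : ∃ i, ⨆ j, f j ≤ 2 * f i := by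
  rcases eq_or_ne (⨆ j, f j) 0 with h0 | h0
  · exact ⟨Classical.arbitrary ι, by simp [h0]⟩
  obtain ⟨i, hi⟩ := lt_iSup_iff.mp (ENNReal.half_lt_self h0 hf)
  exact ⟨i, (ENNReal.div_le_iff_le_mul (.inl two_ne_zero) (.inl ofNat_ne_top)).1 hi.le |>.trans_eq
    (mul_comm _ _)⟩

section

variable {T : Type*} [MeasurableSpace T] {μ : Measure T}

lemma exists_subset_measure_le_forall_le_two_mul (R : Set T) {b : ℝ≥0∞} (hb : b ≠ ∞) :
    ∃ D ⊆ R, MeasurableSet D ∧ μ D ≤ b ∧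
      ∀ D' ⊆ R, MeasurableSet D' → μ D' ≤ b → μ D' ≤ 2 * μ D := by
  let ι := {D : Set T // D ⊆ R ∧ MeasurableSet D ∧ μ D ≤ b}
  have : Nonempty ι := ⟨⟨∅, empty_subset R, .empty, by simp⟩⟩
  obtain ⟨⟨D, hD⟩, hmax⟩ := ENNReal.exists_iSup_le_two_mul (f := fun D : ι => μ D.1)
    (ne_top_of_le_ne_top hb (iSup_le fun D => D.2.2.2))
  exact ⟨D, hD.1, hD.2.1, hD.2.2, fun D' h1 h2 h3 =>
    (le_iSup (fun D : ι => μ D.1) ⟨D', h1, h2, h3⟩).trans hmax⟩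

/-- Greedy exhaustion of `A` within the budget `c`: step `n + 1` adds at least half the measure
of any admissible addition to `B n`. -/
lemma exists_greedy_subset_seq (A : Set T) {c : ℝ≥0∞} (hc : c ≠ ∞) :
    ∃ B : ℕ → Set T, Monotone B ∧ (∀ n, B n ⊆ A ∧ MeasurableSet (B n) ∧ μ (B n) ≤ c) ∧
      ∀ n, ∀ D ⊆ A \ B n, MeasurableSet D → μ D ≤ c - μ (B n) →
        2 * μ (B n) + μ D ≤ 2 * μ (B (n + 1)) := by
  choose D hDA hD hDle hDmax using fun B : Set T =>
    exists_subset_measure_le_forall_le_two_mul (μ := μ) (A \ B) (ne_top_of_le_ne_top hc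
      (tsub_le_self : c - μ B ≤ c))
  let B : ℕ → Set T := fun n => Nat.rec ∅ (fun _ B => B ∪ D B) n
  have hμB_succ (n : ℕ) : μ (B (n + 1)) = μ (B n) + μ (D (B n)) :=
    measure_union (disjoint_sdiff_right.mono_right (hDA _)) (hD _)
  refine ⟨B, monotone_nat_of_le_succ fun n => subset_union_left, fun n => ?_,
    fun n D' hD'A hD' hD'le => ?_⟩
  · induction n with
    | zero => exact ⟨empty_subset A, .empty, by simp [B]⟩
    | succ n ih =>
      refine ⟨union_subset ih.1 ((hDA _).trans sdiff_subset), ih.2.1.union (hD _), ?_⟩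
      calc μ (B (n + 1)) = μ (B n) + μ (D (B n)) := hμB_succ n
        _ ≤ μ (B n) + (c - μ (B n)) := by gcongr; exact hDle _
        _ = c := add_tsub_cancel_of_le ih.2.2
  · rw [hμB_succ, mul_add]
    gcongr
    exact hDmax _ D' hD'A hD' hD'le

lemma MeasureTheory.Integrable.exists_simpleFunc_integral_norm_sub_lt_s8 {Z : Type*}
    [NormedAddCommGroup Z] {G : T → Z} (hG : Integrable G μ) {ε : ℝ} (hε : 0 < ε) :
    ∃ g : SimpleFunc T Z, ∫ t, ‖G t - g t‖ ∂μ < ε := by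
  obtain ⟨g, hg, -⟩ := (memLp_one_iff_integrable.2 hG).exists_simpleFunc_eLpNorm_sub_lt
    one_ne_top (ENNReal.ofReal_pos.2 hε).ne'
  refine ⟨g, ?_⟩
  have hGg : AEStronglyMeasurable (G - ⇑g) μ := hG.1.sub g.aestronglyMeasurable
  calc ∫ t, ‖G t - g t‖ ∂μ = (eLpNorm (G - ⇑g) 1 μ).toReal := by
        rw [toReal_eLpNorm hGg, lpNorm_one_eq_integral_norm hGg, Pi.sub_def]
    _ < ε := ENNReal.toReal_lt_of_lt_ofReal hg

namespace MeasureAtomless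

variable (hμ : MeasureAtomless μ) {A : Set T}
include hμ

lemma exists_subset_measure_pos_two_mul_le (hA : MeasurableSet A) (hA0 : μ A ≠ 0) :
    ∃ B ⊆ A, MeasurableSet B ∧ 0 < μ B ∧ 2 * μ B ≤ μ A := by
  obtain ⟨C, hCA, hC, hC0, hCA'⟩ := hμ A hA hA0
  have hsplit : μ C + μ (A \ C) = μ A := by
    rw [← measure_inter_add_sdiff A hC, inter_eq_right.2 hCA]
  have hdiff0 : 0 < μ (A \ C) := by
    refine pos_iff_ne_zero.2 fun h => hCA'.ne ?_
    rwa [h, add_zero] at hsplit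
  rcases le_total (μ C) (μ (A \ C)) with h | h
  · exact ⟨C, hCA, hC, hC0, by rw [two_mul, ← hsplit]; gcongr⟩
  · exact ⟨A \ C, sdiff_subset, hA.diff hC, hdiff0, by rw [two_mul, ← hsplit]; gcongr⟩

lemma exists_subset_measure_pos_two_pow_mul_le (hA : MeasurableSet A) (hA0 : μ A ≠ 0) (n : ℕ) :
    ∃ B ⊆ A, MeasurableSet B ∧ 0 < μ B ∧ 2 ^ n * μ B ≤ μ A := by
  induction n with
  | zero => exact ⟨A, subset_rfl, hA, pos_iff_ne_zero.2 hA0, by simp⟩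
  | succ n ih =>
    obtain ⟨B, hBA, hB, hB0, hBle⟩ := ih
    obtain ⟨C, hCB, hC, hC0, hCle⟩ := hμ.exists_subset_measure_pos_two_mul_le hB hB0.ne'
    refine ⟨C, hCB.trans hBA, hC, hC0, ?_⟩
    calc 2 ^ (n + 1) * μ C = 2 ^ n * (2 * μ C) := by rw [pow_succ, mul_assoc]
      _ ≤ 2 ^ n * μ B := by gcongr
      _ ≤ μ A := hBle

lemma exists_subset_measure_pos_le (hA : MeasurableSet A) (hA0 : μ A ≠ 0) (hA_top : μ A ≠ ∞)
    {ε : ℝ≥0∞} (hε : ε ≠ 0) : ∃ B ⊆ A, MeasurableSet B ∧ 0 < μ B ∧ μ B ≤ ε := by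
  obtain ⟨n, hn⟩ := ENNReal.exists_nat_mul_gt hε hA_top
  obtain ⟨B, hBA, hB, hB0, hBle⟩ := hμ.exists_subset_measure_pos_two_pow_mul_le hA hA0 n
  refine ⟨B, hBA, hB, hB0, le_of_lt ?_⟩
  have hn2 : (n : ℝ≥0∞) ≤ 2 ^ n := by exact_mod_cast Nat.lt_two_pow_self.le
  have : 2 ^ n * μ B < 2 ^ n * ε := hBle.trans_lt (hn.trans_le (by gcongr))
  exact (ENNReal.mul_lt_mul_iff_right (pow_ne_zero _ two_ne_zero)
    (pow_ne_top ofNat_ne_top)).1 this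

lemma exists_subset_measure_eq_s8 [IsFiniteMeasure μ] (hA : MeasurableSet A) {c : ℝ≥0∞}
    (hc : c ≤ μ A) : ∃ B ⊆ A, MeasurableSet B ∧ μ B = c := by
  have hc_top : c ≠ ∞ := ne_top_of_le_ne_top (measure_ne_top μ A) hc
  obtain ⟨B, hmono, hB, hgreedy⟩ := exists_greedy_subset_seq (μ := μ) A hc_top
  set U := ⋃ n, B n
  have hU : MeasurableSet U := .iUnion fun n => (hB n).2.1
  have hμU : μ U ≤ c := by
    rw [hmono.measure_iUnion]
    exact iSup_le fun n => (hB n).2.2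
  refine ⟨U, iUnion_subset fun n => (hB n).1, hU, le_antisymm hμU (not_lt.1 fun hlt => ?_)⟩
  have hAU : μ (A \ U) ≠ 0 :=
    ((tsub_pos_of_lt (hlt.trans_le hc)).trans_le le_measure_sdiff).ne'
  obtain ⟨D, hDA, hD, hD0, hDle⟩ := hμ.exists_subset_measure_pos_le (hA.diff hU) hAU
    (measure_ne_top μ _) (tsub_pos_of_lt hlt).ne'
  -- `D` stays admissible at every step, so each step adds at least `μ D / 2`.
  have hgrowth (n : ℕ) : n * μ D ≤ 2 * μ (B n) := by
    induction n with
    | zero => simp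
    | succ n ih =>
      have hBU : B n ⊆ U := subset_iUnion B n
      calc ((n + 1 : ℕ) : ℝ≥0∞) * μ D = n * μ D + μ D := by push_cast; ring
        _ ≤ 2 * μ (B n) + μ D := by gcongr
        _ ≤ 2 * μ (B (n + 1)) := hgreedy n D (hDA.trans (sdiff_subset_sdiff_right hBU)) hD
          (hDle.trans (tsub_le_tsub_left (measure_mono hBU) c))
  obtain ⟨n, hn⟩ := ENNReal.exists_nat_mul_gt hD0.ne'
    (mul_ne_top ofNat_ne_top hc_top : (2 : ℝ≥0∞) * c ≠ ∞)
  exact (hn.trans_le (hgrowth n)).not_ge (by gcongr; exact (hB n).2.2)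

variable {S : Set T}

lemma exists_subset_measure_restrict_preimage_eq [IsFiniteMeasure μ] {Z : Type*}
    (g : SimpleFunc T Z) (hS : MeasurableSet S) {c : ℝ≥0∞} (hc : c ≤ 1) :
    ∃ E ⊆ S, MeasurableSet E ∧
      ∀ v, μ.restrict E (g ⁻¹' {v}) = c * μ.restrict S (g ⁻¹' {v}) := by
  choose B hBS hB hμB using fun v =>
    hμ.exists_subset_measure_eq_s8 (hS.inter (g.measurableSet_fiber v))
      (mul_le_of_le_one_left' hc)
  refine ⟨⋃ v ∈ g.range, B v, iUnion₂_subset fun v _ => (hBS v).trans inter_subset_left,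
    g.range.measurableSet_biUnion fun v _ => hB v, fun v => ?_⟩
  have hfiber : g ⁻¹' {v} ∩ ⋃ w ∈ g.range, B w = B v := by
    ext t
    simp only [mem_inter_iff, mem_preimage, mem_singleton_iff, mem_iUnion, exists_prop]
    constructor
    · rintro ⟨rfl, w, -, ht⟩
      rwa [((hBS w ht).2 : g t = w)]
    · exact fun ht => ⟨(hBS v ht).2, v, (hBS v ht).2 ▸ g.mem_range_self t, ht⟩
  rw [Measure.restrict_apply (g.measurableSet_fiber v), Measure.restrict_apply
    (g.measurableSet_fiber v), hfiber, hμB, inter_comm]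

variable {Z : Type*} [NormedAddCommGroup Z] [NormedSpace ℝ Z] [CompleteSpace Z]

lemma exists_subset_measure_eq_setIntegral_eq [IsFiniteMeasure μ] (g : SimpleFunc T Z)
    (hS : MeasurableSet S) {r : ℝ} (hr0 : 0 ≤ r) (hr1 : r ≤ 1) :
    ∃ E ⊆ S, MeasurableSet E ∧ μ E = ENNReal.ofReal r * μ S ∧
      ∫ t in E, g t ∂μ = r • ∫ t in S, g t ∂μ := by
  obtain ⟨E, hES, hE, hfiber⟩ :=
    hμ.exists_subset_measure_restrict_preimage_eq g hS (ENNReal.ofReal_le_one.2 hr1)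
  refine ⟨E, hES, hE, ?_, ?_⟩
  · rw [← Measure.restrict_apply_univ, ← Measure.restrict_apply_univ (s := S),
      ← g.sum_range_measure_preimage_singleton, ← g.sum_range_measure_preimage_singleton,
      Finset.mul_sum]
    exact Finset.sum_congr rfl fun v _ => hfiber v
  · rw [g.integral_eq_sum g.integrable_of_isFiniteMeasure,
      g.integral_eq_sum g.integrable_of_isFiniteMeasure, Finset.smul_sum]
    refine Finset.sum_congr rfl fun v _ => ?_
    rw [smul_smul, Measure.real, Measure.real, hfiber, ENNReal.toReal_mul,
      ENNReal.toReal_ofReal hr0]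

lemma exists_subset_measure_eq_norm_setIntegral_sub_le_s8 [IsFiniteMeasure μ] {G : T → Z}
    (hG : Integrable G μ) (hS : MeasurableSet S) {r : ℝ} (hr0 : 0 ≤ r) (hr1 : r ≤ 1)
    {ε : ℝ} (hε : 0 < ε) :
    ∃ E ⊆ S, MeasurableSet E ∧ μ E = ENNReal.ofReal r * μ S ∧
      ‖∫ t in E, G t ∂μ - r • ∫ t in S, G t ∂μ‖ ≤ ε := by
  obtain ⟨g, hg⟩ := hG.exists_simpleFunc_integral_norm_sub_lt_s8 (half_pos hε)
  obtain ⟨E, hES, hE, hμE, hgE⟩ := hμ.exists_subset_measure_eq_setIntegral_eq g hS hr0 hr1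
  refine ⟨E, hES, hE, hμE, ?_⟩
  have hgi : Integrable g μ := g.integrable_of_isFiniteMeasure
  have hbound (s : Set T) : ‖∫ t in s, (G t - g t) ∂μ‖ ≤ ∫ t, ‖G t - g t‖ ∂μ :=
    (norm_integral_le_integral_norm _).trans <|
      setIntegral_le_integral (hG.sub hgi).norm (.of_forall fun _ => norm_nonneg _)
  have hsplit : ∫ t in E, G t ∂μ - r • ∫ t in S, G t ∂μ =
      ∫ t in E, (G t - g t) ∂μ - r • ∫ t in S, (G t - g t) ∂μ := by
    rw [integral_sub hG.integrableOn hgi.integrableOn, integral_sub hG.integrableOn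
      hgi.integrableOn, hgE, smul_sub]
    abel
  calc ‖∫ t in E, G t ∂μ - r • ∫ t in S, G t ∂μ‖
      ≤ ‖∫ t in E, (G t - g t) ∂μ‖ + r * ‖∫ t in S, (G t - g t) ∂μ‖ := by
        rw [hsplit]
        refine (norm_sub_le _ _).trans_eq ?_
        rw [norm_smul, Real.norm_of_nonneg hr0]
    _ ≤ ∫ t, ‖G t - g t‖ ∂μ + 1 * ∫ t, ‖G t - g t‖ ∂μ := by
        gcongr
        exacts [hbound E, hbound S]
    _ ≤ ε := by linarith

lemma exists_seq_subset_measure_eq_tendsto_setIntegral [IsFiniteMeasure μ] {G : T → Z}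
    (hG : Integrable G μ) (hS : MeasurableSet S) {r : ℝ} (hr0 : 0 ≤ r) (hr1 : r ≤ 1) :
    ∃ E : ℕ → Set T,
      (∀ n, E n ⊆ S ∧ MeasurableSet (E n) ∧ μ (E n) = ENNReal.ofReal r * μ S) ∧
      Tendsto (fun n => ∫ t in E n, G t ∂μ) atTop (𝓝 (r • ∫ t in S, G t ∂μ)) := by
  choose E hES hE hμE hclose using fun n : ℕ =>
    hμ.exists_subset_measure_eq_norm_setIntegral_sub_le_s8 hG hS hr0 hr1
      (Nat.one_div_pos_of_nat (n := n))
  refine ⟨E, fun n => ⟨hES n, hE n, hμE n⟩, tendsto_iff_norm_sub_tendsto_zero.2 ?_⟩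
  exact squeeze_zero (fun _ => norm_nonneg _) hclose tendsto_one_div_add_atTop_nhds_zero_nat

end MeasureAtomless

end

theorem exists_approx_fraction_sets_states_general {T : Type*} [MeasurableSpace T]
    (μ : Measure T) [IsFiniteMeasure μ] (hμ : MeasureAtomless μ)
    {Ω : Type*} [Fintype Ω]
    {Y : Type*} [NormedAddCommGroup Y] [NormedSpace ℝ Y] [CompleteSpace Y]
    (y f : T → Ω → Y)
    (hy : ∀ ω, Integrable (fun t => y t ω) μ) (hf : ∀ ω, Integrable (fun t => f t ω) μ)
    {S : Set T} (hS : MeasurableSet S)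
    {r : ℝ} (hr : r ∈ Set.Ioo (0 : ℝ) 1) :
    ∃ En : ℕ → Set T, (∀ n, MeasurableSet (En n) ∧ En n ⊆ S) ∧
      ∀ ω, Tendsto
        (fun n => (((μ (En n)).toReal : ℝ), ∫ t in En n, (y t ω - f t ω) ∂μ)) atTop
        (𝓝 (r * (μ S).toReal, r • ∫ t in S, (y t ω - f t ω) ∂μ)) := by
  have hG (ω : Ω) : Integrable (fun t => y t ω - f t ω) μ := (hy ω).sub (hf ω)
  obtain ⟨E, hE, hlim⟩ := hμ.exists_seq_subset_measure_eq_tendsto_setIntegral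
    (Integrable.of_eval hG) hS hr.1.le hr.2.le
  refine ⟨E, fun n => ⟨(hE n).2.1, (hE n).1⟩, fun ω => ?_⟩
  have hμE (n : ℕ) : (μ (E n)).toReal = r * (μ S).toReal := by
    rw [(hE n).2.2, ENNReal.toReal_mul, ENNReal.toReal_ofReal hr.1.le]
  simp_rw [hμE]
  refine tendsto_const_nhds.prodMk_nhds ?_
  simpa [Function.comp_def, eval_integral fun ω => (hG ω).restrict] using
    ((continuous_apply ω).tendsto _).comp hlim

/-- Lyapunov-type approximation uniformly over finitely many states: a single sequence
`Eₙ ⊆ S` works for all `ω ∈ Ω` at once. -/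
theorem exists_approx_fraction_sets_states {T : Type*} [MeasurableSpace T]
    (μ : Measure T) [IsFiniteMeasure μ] (hμ : MeasureAtomless μ)
    {Ω : Type*} [Fintype Ω]
    {Y : Type*} [NormedAddCommGroup Y] [NormedSpace ℝ Y] [CompleteSpace Y]
    (y f : T → Ω → Y)
    (hy : ∀ ω, Integrable (fun t => y t ω) μ) (hf : ∀ ω, Integrable (fun t => f t ω) μ)
    {S : Set T} (hS : MeasurableSet S) (hSpos : 0 < μ S)
    {r : ℝ} (hr : r ∈ Set.Ioo (0 : ℝ) 1) :
    ∃ En : ℕ → Set T, (∀ n, MeasurableSet (En n) ∧ En n ⊆ S) ∧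
      ∀ ω, Tendsto
        (fun n => (((μ (En n)).toReal : ℝ), ∫ t in En n, (y t ω - f t ω) ∂μ)) atTop
        (𝓝 (r * (μ S).toReal, r • ∫ t in S, (y t ω - f t ω) ∂μ)) :=
  exists_approx_fraction_sets_states_general μ hμ y f hy hf hS hr
end

section
/- Let (T, Σ, μ) be an atomless finite measure space, Y an ordered Banach space with int Y₊ ≠ ∅, Ω finite, and g, a : T × Ω → Y₊ Bochner integrable in t for each ω, with z(ω) := ∫_S (a(·,ω) − g(·,ω)) dμ ≫ 0 for all ω ∈ Ω, where S ∈ Σ, μ(S) > 0. Then for every δ ∈ (0,1) there exists F ∈ Σ, F ⊆ S, with μ(F) = δ·μ(S) and ∫_F (a(·,ω) − g(·,ω)) dμ ≫ 0 for all ω ∈ Ω. -/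
open MeasureTheory Filter Topology

/-
Approximate Lyapunov convexity. Approximate the `Ω → Y`-valued integrand `a - g` on `S` in `L¹` by
a simple function `s` to within `ε / 2`. By Sierpiński's theorem each of the finitely many fibres
of `s` in `S` has a subset of exactly `δ` times its measure; their union `F` has `μ F = δ μ S` and
`∫_F s = δ ∫_S s`, hence `∫_F (a - g)` lies within `ε` of `δ ∫_S (a - g)`. The latter is an
interior point of the cone in every coordinate, and so, for `ε` small, is the former.
-/

open Set ENNReal

theorem exists_monotone_forall_le_add_inv {α : Type*} [Preorder α] (m : α → ℝ≥0∞)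
    {𝒜 : Set α} {a₀ : α} (ha₀ : a₀ ∈ 𝒜) {M : ℝ≥0∞} (hM : M ≠ ∞) (hm : ∀ a ∈ 𝒜, m a ≤ M) :
    ∃ a : ℕ → α, Monotone a ∧ (∀ n, a n ∈ 𝒜) ∧
      ∀ n, ∀ b ∈ 𝒜, a n ≤ b → m b ≤ m (a (n + 1)) + (n : ℝ≥0∞)⁻¹ := by
  have step : ∀ (n : ℕ) (a : 𝒜), ∃ a' : 𝒜, a.1 ≤ a'.1 ∧
      ∀ b ∈ 𝒜, a.1 ≤ b → m b ≤ m a'.1 + (n : ℝ≥0∞)⁻¹ := by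
    intro n a
    set sup := ⨆ b : {b : 𝒜 // a.1 ≤ b.1}, m b.1.1
    have hle : ∀ b ∈ 𝒜, a.1 ≤ b → m b ≤ sup := fun b hb hab =>
      le_iSup (fun b : {b : 𝒜 // a.1 ≤ b.1} => m b.1.1) ⟨⟨b, hb⟩, hab⟩
    rcases le_or_gt sup (n : ℝ≥0∞)⁻¹ with h | h
    · exact ⟨a, le_rfl, fun b hb hab => (hle b hb hab).trans (h.trans le_add_self)⟩
    · have hfin : sup ≠ ∞ := ne_top_of_le_ne_top hM (iSup_le fun b => hm _ b.1.2)
      obtain ⟨b, hb⟩ := lt_iSup_iff.1 <| ENNReal.sub_lt_self hfin (pos_of_gt h).ne'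
        (ENNReal.inv_ne_zero.2 (natCast_ne_top n))
      exact ⟨b.1, b.2, fun c hc hac =>
        tsub_le_iff_right.1 ((tsub_le_tsub_right (hle c hc hac) _).trans hb.le)⟩
  choose next hnext_le hnext using step
  let a : ℕ → 𝒜 := fun n => Nat.rec ⟨a₀, ha₀⟩ (fun n b => next n b) n
  exact ⟨fun n => (a n).1, monotone_nat_of_le_succ fun n => hnext_le n (a n),
    fun n => (a n).2, fun n => hnext n (a n)⟩

namespace MeasureTheory.SimpleFunc

variable {X : Type*} [MeasurableSpace X] {ν ν' : Measure X} {c : ℝ≥0∞}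

theorem measure_univ_eq_mul_of_forall_fiber {β : Type*} (s : SimpleFunc X β)
    (h : ∀ y, ν (s ⁻¹' {y}) = c * ν' (s ⁻¹' {y})) : ν univ = c * ν' univ := by
  rw [← s.sum_range_measure_preimage_singleton ν, ← s.sum_range_measure_preimage_singleton ν',
    Finset.mul_sum]
  exact Finset.sum_congr rfl fun y _ => h y

theorem integral_eq_smul_of_forall_fiber {E : Type*} [NormedAddCommGroup E] [NormedSpace ℝ E]
    [CompleteSpace E] [IsFiniteMeasure ν] [IsFiniteMeasure ν'] (s : SimpleFunc X E)
    (h : ∀ y, ν (s ⁻¹' {y}) = c * ν' (s ⁻¹' {y})) :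
    ∫ x, s x ∂ν = c.toReal • ∫ x, s x ∂ν' := by
  rw [s.integral_eq_sum (s.integrable_of_isFiniteMeasure),
    s.integral_eq_sum (s.integrable_of_isFiniteMeasure), Finset.smul_sum]
  refine Finset.sum_congr rfl fun y _ => ?_
  rw [measureReal_def, measureReal_def, h, toReal_mul, smul_smul]

end MeasureTheory.SimpleFunc

namespace MeasureAtomless

variable {X : Type*} [MeasurableSpace X] {μ : Measure X} [IsFiniteMeasure μ]

theorem exists_subset_pos_measure_le_half (hμ : MeasureAtomless μ) {A : Set X}
    (hA : MeasurableSet A) (h0 : μ A ≠ 0) :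
    ∃ B ⊆ A, MeasurableSet B ∧ 0 < μ B ∧ μ B ≤ μ A / 2 := by
  obtain ⟨B, hBA, hB, hB0, hBlt⟩ := hμ A hA h0
  rcases le_or_gt (μ B) (μ A / 2) with h | h
  · exact ⟨B, hBA, hB, hB0, h⟩
  · have hdiff : μ (A \ B) = μ A - μ B :=
      measure_sdiff hBA hB.nullMeasurableSet (measure_ne_top μ B)
    refine ⟨A \ B, sdiff_subset, hA.diff hB, hdiff ▸ tsub_pos_of_lt hBlt, ?_⟩
    calc μ (A \ B) = μ A - μ B := hdiff
      _ ≤ μ A - μ A / 2 := tsub_le_tsub_left h.le _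
      _ = μ A / 2 := ENNReal.sub_half (measure_ne_top μ A)

theorem exists_subset_pos_measure_le (hμ : MeasureAtomless μ) {A : Set X}
    (hA : MeasurableSet A) (h0 : μ A ≠ 0) {ε : ℝ≥0∞} (hε : ε ≠ 0) :
    ∃ B ⊆ A, MeasurableSet B ∧ 0 < μ B ∧ μ B ≤ ε := by
  have halving : ∀ n : ℕ, ∃ B ⊆ A, MeasurableSet B ∧ 0 < μ B ∧ μ B ≤ μ A * 2⁻¹ ^ n := by
    intro n
    induction n with
    | zero => exact ⟨A, subset_rfl, hA, pos_iff_ne_zero.2 h0, by simp⟩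
    | succ n ih =>
      obtain ⟨B, hBA, hB, hB0, hBle⟩ := ih
      obtain ⟨C, hCB, hC, hC0, hCle⟩ := hμ.exists_subset_pos_measure_le_half hB hB0.ne'
      refine ⟨C, hCB.trans hBA, hC, hC0, ?_⟩
      calc μ C ≤ μ B * 2⁻¹ := div_eq_mul_inv (μ B) 2 ▸ hCle
        _ ≤ μ A * 2⁻¹ ^ n * 2⁻¹ := by gcongr
        _ = μ A * 2⁻¹ ^ (n + 1) := by rw [pow_succ, mul_assoc]
  have hlim : Tendsto (fun n : ℕ => μ A * 2⁻¹ ^ n) atTop (𝓝 0) := by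
    simpa using ENNReal.Tendsto.const_mul
      (ENNReal.tendsto_pow_atTop_nhds_zero_of_lt_one (by norm_num : (2⁻¹ : ℝ≥0∞) < 1))
      (Or.inr (measure_ne_top μ A))
  obtain ⟨n, hn⟩ := (hlim.eventually_lt_const (pos_iff_ne_zero.2 hε)).exists
  obtain ⟨B, hBA, hB, hB0, hBle⟩ := halving n
  exact ⟨B, hBA, hB, hB0, hBle.trans hn.le⟩

/-- Sierpiński's theorem. -/
theorem exists_subset_measure_eq_s11 (hμ : MeasureAtomless μ) {A : Set X} (hA : MeasurableSet A)
    {r : ℝ≥0∞} (hr : r ≤ μ A) :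
    ∃ B ⊆ A, MeasurableSet B ∧ μ B = r := by
  obtain ⟨B, hBmono, hB𝒜, hBmax⟩ := exists_monotone_forall_le_add_inv μ
    (𝒜 := {B | MeasurableSet B ∧ B ⊆ A ∧ μ B ≤ r}) ⟨MeasurableSet.empty, empty_subset A, by simp⟩
    (hr.trans_lt (measure_lt_top μ A)).ne fun B hB => hB.2.2
  set U := ⋃ n, B n
  have hU : MeasurableSet U := MeasurableSet.iUnion fun n => (hB𝒜 n).1
  have hμU : Tendsto (fun n => μ (B n)) atTop (𝓝 (μ U)) := tendsto_measure_iUnion_atTop hBmono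
  have hUr : μ U ≤ r := le_of_tendsto' hμU fun n => (hB𝒜 n).2.2
  refine ⟨U, iUnion_subset fun n => (hB𝒜 n).2.1, hU, hUr.antisymm (not_lt.1 fun hlt => ?_)⟩
  have hgap : 0 < r - μ U := tsub_pos_of_lt hlt
  have hAU : μ (A \ U) ≠ 0 :=
    (hgap.trans_le ((tsub_le_tsub_right hr _).trans (le_measure_sdiff))).ne'
  -- A positive piece `C` outside `U` could have been added at every stage of the greedy choice.
  obtain ⟨C, hCAU, hC, hC0, hCle⟩ := hμ.exists_subset_pos_measure_le (hA.diff hU) hAU hgap.ne'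
  have hgrow : ∀ n, μ (B n) + μ C ≤ μ (B (n + 1)) + (n : ℝ≥0∞)⁻¹ := by
    intro n
    have hdisj : Disjoint (B n) C :=
      disjoint_left.2 fun x hx hxC => (hCAU hxC).2 (mem_iUnion_of_mem n hx)
    rw [← measure_union hdisj hC]
    refine hBmax n _ ⟨(hB𝒜 n).1.union hC, union_subset (hB𝒜 n).2.1 (hCAU.trans sdiff_subset), ?_⟩
      subset_union_left
    calc μ (B n ∪ C) = μ (B n) + μ C := measure_union hdisj hC
      _ ≤ μ U + (r - μ U) := add_le_add (measure_mono (subset_iUnion B n)) hCle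
      _ = r := add_tsub_cancel_of_le hUr
  have hlim : μ U + μ C ≤ μ U + 0 := le_of_tendsto_of_tendsto' (hμU.add tendsto_const_nhds)
    ((hμU.comp (tendsto_add_atTop_nat 1)).add ENNReal.tendsto_inv_nat_nhds_zero) hgrow
  exact hC0.ne' (nonpos_iff_eq_zero.1 ((ENNReal.add_le_add_iff_left (measure_ne_top μ U)).1 hlim))

theorem exists_subset_forall_measure_fiber_eq (hμ : MeasureAtomless μ) {β : Type*}
    (s : SimpleFunc X β) {S : Set X} (hS : MeasurableSet S) {c : ℝ≥0∞} (hc : c ≤ 1) :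
    ∃ F ⊆ S, MeasurableSet F ∧ ∀ y, μ (s ⁻¹' {y} ∩ F) = c * μ (s ⁻¹' {y} ∩ S) := by
  choose B hBsub hB hμB using fun y => hμ.exists_subset_measure_eq_s11
    ((s.measurableSet_fiber y).inter hS) (mul_le_of_le_one_left' hc)
  refine ⟨⋃ y ∈ s.range, B y, iUnion₂_subset fun y _ => (hBsub y).trans inter_subset_right,
    s.range.measurableSet_biUnion fun y _ => hB y, fun y => ?_⟩
  suffices s ⁻¹' {y} ∩ ⋃ z ∈ s.range, B z = B y by rw [this, hμB]
  ext x
  simp only [mem_inter_iff, mem_iUnion, mem_preimage, mem_singleton_iff, exists_prop]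
  constructor
  · rintro ⟨rfl, z, -, hx⟩
    obtain rfl : s x = z := (hBsub z hx).1
    exact hx
  · intro hx
    obtain rfl : s x = y := (hBsub y hx).1
    exact ⟨rfl, s x, s.mem_range_self x, hx⟩

variable {E : Type*} [NormedAddCommGroup E] [NormedSpace ℝ E] [CompleteSpace E]

theorem exists_subset_measure_eq_norm_setIntegral_sub_lt (hμ : MeasureAtomless μ) {S : Set X}
    (hS : MeasurableSet S) {f : X → E} (hf : IntegrableOn f S μ) {δ : ℝ} (hδ0 : 0 ≤ δ)
    (hδ1 : δ ≤ 1) {ε : ℝ} (hε : 0 < ε) :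
    ∃ F ⊆ S, MeasurableSet F ∧ μ F = ENNReal.ofReal δ * μ S ∧
      ‖∫ t in F, f t ∂μ - δ • ∫ t in S, f t ∂μ‖ < ε := by
  obtain ⟨s, hs, -⟩ := (memLp_one_iff_integrable.2 hf).exists_simpleFunc_eLpNorm_sub_lt
    one_ne_top (ENNReal.ofReal_pos.2 (half_pos hε)).ne'
  obtain ⟨F, hFS, hF, hfiber⟩ :=
    hμ.exists_subset_forall_measure_fiber_eq s hS (ENNReal.ofReal_le_one.2 hδ1)
  have hrestrict : ∀ y, μ.restrict F (s ⁻¹' {y}) = ENNReal.ofReal δ * μ.restrict S (s ⁻¹' {y}) :=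
    fun y => by simp only [Measure.restrict_apply (s.measurableSet_fiber y), hfiber]
  refine ⟨F, hFS, hF, by simpa using s.measure_univ_eq_mul_of_forall_fiber hrestrict, ?_⟩
  have hsF : ∫ t in F, s t ∂μ = δ • ∫ t in S, s t ∂μ := by
    rw [s.integral_eq_smul_of_forall_fiber hrestrict, toReal_ofReal hδ0]
  have hsint : ∀ G, IntegrableOn s G μ := fun G => s.integrable_of_isFiniteMeasure
  have hfs : IntegrableOn (fun t => f t - s t) S μ := hf.sub (hsint S)
  set err := ∫ t in S, ‖f t - s t‖ ∂μ
  have herr : err < ε / 2 := by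
    simp only [eLpNorm_one_eq_lintegral_enorm, Pi.sub_apply] at hs
    rwa [← ofReal_integral_norm_eq_lintegral_enorm hfs,
      ENNReal.ofReal_lt_ofReal_iff (half_pos hε)] at hs
  have hbound : ∀ G ⊆ S, ‖∫ t in G, (f t - s t) ∂μ‖ ≤ err := fun G hG =>
    (norm_integral_le_integral_norm _).trans
      (setIntegral_mono_set hfs.norm (.of_forall fun _ => norm_nonneg _) hG.eventuallyLE)
  calc ‖∫ t in F, f t ∂μ - δ • ∫ t in S, f t ∂μ‖
      = ‖∫ t in F, (f t - s t) ∂μ - δ • ∫ t in S, (f t - s t) ∂μ‖ := by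
        rw [integral_sub (hf.mono_set hFS) (hsint F), integral_sub hf (hsint S), smul_sub, hsF,
          sub_sub_sub_cancel_right]
    _ ≤ ‖∫ t in F, (f t - s t) ∂μ‖ + δ * ‖∫ t in S, (f t - s t) ∂μ‖ := by
        refine (norm_sub_le _ _).trans_eq ?_
        rw [norm_smul, Real.norm_of_nonneg hδ0]
    _ ≤ err + 1 * err := by
        gcongr
        exacts [hbound F hFS, hbound S subset_rfl]
    _ < ε := by linarith

end MeasureAtomless

open scoped Pointwise in
theorem smul_interior_subset_interior_of_smul_subset {G₀ α : Type*} [GroupWithZero G₀]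
    [MulAction G₀ α] [TopologicalSpace α] [ContinuousConstSMul G₀ α] {P : Set α} {c : G₀}
    (hc : c ≠ 0) (hP : c • P ⊆ P) : c • interior P ⊆ interior P :=
  interior_smul₀ hc P ▸ interior_mono hP

theorem shrink_blocking_coalition_general {X : Type*} [MeasurableSpace X]
    (μ : Measure X) [IsFiniteMeasure μ] (hμ : MeasureAtomless μ)
    {Y : Type*} [NormedAddCommGroup Y] [NormedSpace ℝ Y] [CompleteSpace Y] [PartialOrder Y]
    (hcone : ∀ (c : ℝ) (x : Y), 0 < c → 0 ≤ x → 0 ≤ c • x)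
    {Ω : Type*} [Fintype Ω]
    (g a : X → Ω → Y)
    (hgi : ∀ ω, Integrable (fun t => g t ω) μ) (hai : ∀ ω, Integrable (fun t => a t ω) μ)
    {S : Set X} (hS : MeasurableSet S)
    (hz : ∀ ω : Ω, (∫ t in S, (a t ω - g t ω) ∂μ) ∈ interior {y : Y | 0 ≤ y})
    {δ : ℝ} (hδ : δ ∈ Set.Ioo (0 : ℝ) 1) :
    ∃ F : Set X, MeasurableSet F ∧ F ⊆ S ∧ (μ F).toReal = δ * (μ S).toReal ∧
      ∀ ω : Ω, (∫ t in F, (a t ω - g t ω) ∂μ) ∈ interior {y : Y | 0 ≤ y} := by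
  obtain ⟨hδ0, hδ1⟩ := hδ
  set P := interior {y : Y | 0 ≤ y}
  have hf : ∀ ω, Integrable (fun t => a t ω - g t ω) μ := fun ω => (hai ω).sub (hgi ω)
  have hU : IsOpen (univ.pi fun _ : Ω => P) := isOpen_set_pi finite_univ fun _ _ => isOpen_interior
  have hδz : δ • ∫ t in S, (fun ω => a t ω - g t ω) ∂μ ∈ univ.pi fun _ => P := fun ω _ => by
    rw [Pi.smul_apply, eval_integral fun ω => (hf ω).integrableOn]
    exact smul_interior_subset_interior_of_smul_subset hδ0.ne'
      (by rintro _ ⟨y, hy, rfl⟩; exact hcone δ y hδ0 hy) (smul_mem_smul_set (hz ω))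
  obtain ⟨ε, hε, hball⟩ := Metric.isOpen_iff.1 hU _ hδz
  obtain ⟨F, hFS, hF, hμF, hclose⟩ := hμ.exists_subset_measure_eq_norm_setIntegral_sub_lt hS
    (Integrable.of_eval hf).integrableOn hδ0.le hδ1.le hε
  refine ⟨F, hF, hFS, by rw [hμF, toReal_mul, toReal_ofReal hδ0.le], fun ω => ?_⟩
  simpa [eval_integral fun ω => (hf ω).integrableOn] using
    hball (mem_ball_iff_norm.2 hclose) ω (mem_univ ω)

/-- Shrinking a blocking coalition: if `∫_S (a − g) ≫ 0` for all states then for every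
`δ ∈ (0,1)` there is `F ⊆ S` with `μ F = δ·μ S` and `∫_F (a − g) ≫ 0` for all states. -/
theorem shrink_blocking_coalition {X : Type*} [MeasurableSpace X]
    (μ : Measure X) [IsFiniteMeasure μ] (hμ : MeasureAtomless μ)
    {Y : Type*} [NormedAddCommGroup Y] [NormedSpace ℝ Y] [CompleteSpace Y] [PartialOrder Y]
    (hcone : ∀ (c : ℝ) (x : Y), 0 < c → 0 ≤ x → 0 ≤ c • x)
    (hiY : (interior {y : Y | 0 ≤ y}).Nonempty)
    {Ω : Type*} [Fintype Ω]
    (g a : X → Ω → Y)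
    (hgi : ∀ ω, Integrable (fun t => g t ω) μ) (hai : ∀ ω, Integrable (fun t => a t ω) μ)
    {S : Set X} (hS : MeasurableSet S) (hSpos : 0 < μ S)
    (hz : ∀ ω : Ω, (∫ t in S, (a t ω - g t ω) ∂μ) ∈ interior {y : Y | 0 ≤ y})
    {δ : ℝ} (hδ : δ ∈ Set.Ioo (0 : ℝ) 1) :
    ∃ F : Set X, MeasurableSet F ∧ F ⊆ S ∧ (μ F).toReal = δ * (μ S).toReal ∧
      ∀ ω : Ω, (∫ t in F, (a t ω - g t ω) ∂μ) ∈ interior {y : Y | 0 ≤ y} :=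
  shrink_blocking_coalition_general μ hμ hcone g a hgi hai hS hz hδ
end
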